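/- Let H = {(z, w) ∈ ℂ² : |z| = |w|} (the singular Levi-flat cone), let r > 0, and let K = {(z, w) ∈ H : |z|² + |w|² ≤ r²}, a compact subset of H. Then the rational hull K̂_rat contains the open Euclidean ball of radius r/2 centered at the origin of ℂ². -/

import Mathlib

open Metric

noncomputable section

/-- `H` is a (singular) real-analytic hypersurface in the open set `U ⊆ ℂⁿ`:
`H = {z ∈ U : ρ z = 0}` for some real-analytic `ρ : U → ℝ` (analytic over `ℝ`),
`H` nonempty, and `ρ` does not vanish identically on any connected component of `U`. -/
def IsRealAnalyticHypersurface {n : ℕ} (U H : Set (EuclideanSpace ℂ (Fin n))) : Prop :=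
  IsOpen U ∧ H.Nonempty ∧
    ∃ ρ : EuclideanSpace ℂ (Fin n) → ℝ,
      AnalyticOnNhd ℝ ρ U ∧
      H = {z | z ∈ U ∧ ρ z = 0} ∧
      ∀ z ∈ U, ∃ w ∈ connectedComponentIn U z, ρ w ≠ 0

/-- `C = φ '' 𝔻` is a support curve for `H` at `p`, parametrized by the nonconstant
holomorphic map `φ : 𝔻 → U` with `φ 0 = p` and `C ∩ H = {p}`. -/
def IsSupportCurveVia {n : ℕ} (U H : Set (EuclideanSpace ℂ (Fin n)))
    (p : EuclideanSpace ℂ (Fin n)) (φ : ℂ → EuclideanSpace ℂ (Fin n))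
    (C : Set (EuclideanSpace ℂ (Fin n))) : Prop :=
  DifferentiableOn ℂ φ (ball 0 1) ∧
  Set.MapsTo φ (ball 0 1) U ∧
  (∃ a ∈ ball (0 : ℂ) 1, ∃ b ∈ ball (0 : ℂ) 1, φ a ≠ φ b) ∧
  φ 0 = p ∧
  C = φ '' ball 0 1 ∧
  C ∩ H = {p}

/-- `C` is a support curve for `H` at `p`. -/
def IsSupportCurve {n : ℕ} (U H : Set (EuclideanSpace ℂ (Fin n)))
    (p : EuclideanSpace ℂ (Fin n)) (C : Set (EuclideanSpace ℂ (Fin n))) : Prop :=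
  ∃ φ : ℂ → EuclideanSpace ℂ (Fin n), IsSupportCurveVia U H p φ C

/-- `V` is a connected component of `U \ H`. -/
def IsComponentOfComplement {n : ℕ} (U H V : Set (EuclideanSpace ℂ (Fin n))) : Prop :=
  ∃ x ∈ U \ H, V = connectedComponentIn (U \ H) x

/-- `H` is curve-supported from two sides at `p`: there are two support curves at `p`
lying (off `p`) in two distinct connected components of `U \ H`. -/
def CurveSupportedFromTwoSides {n : ℕ} (U H : Set (EuclideanSpace ℂ (Fin n)))
    (p : EuclideanSpace ℂ (Fin n)) : Prop :=
  ∃ C₁ C₂ V₁ V₂ : Set (EuclideanSpace ℂ (Fin n)),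
    IsSupportCurve U H p C₁ ∧ IsSupportCurve U H p C₂ ∧
    IsComponentOfComplement U H V₁ ∧ IsComponentOfComplement U H V₂ ∧
    V₁ ≠ V₂ ∧ C₁ \ {p} ⊆ V₁ ∧ C₂ \ {p} ⊆ V₂

/-- `ψ` is an analytic disc attached to `S`: a nonconstant continuous map on the closed
unit disc, holomorphic on the open unit disc, with boundary values in `S`. -/
def IsAttachedDisc {n : ℕ} (S : Set (EuclideanSpace ℂ (Fin n)))
    (ψ : ℂ → EuclideanSpace ℂ (Fin n)) : Prop :=
  ContinuousOn ψ (closedBall 0 1) ∧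
  DifferentiableOn ℂ ψ (ball 0 1) ∧
  (∃ a ∈ closedBall (0 : ℂ) 1, ∃ b ∈ closedBall (0 : ℂ) 1, ψ a ≠ ψ b) ∧
  ψ '' sphere 0 1 ⊆ S

/-- The polynomial hull of `K ⊆ ℂⁿ`. -/
def polyHull {n : ℕ} (K : Set (EuclideanSpace ℂ (Fin n))) : Set (EuclideanSpace ℂ (Fin n)) :=
  {z | ∀ P : MvPolynomial (Fin n) ℂ,
    ‖MvPolynomial.eval (fun i => z i) P‖ ≤
      ⨆ w : K, ‖MvPolynomial.eval (fun i => (w : EuclideanSpace ℂ (Fin n)) i) P‖}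

/-- The rational hull of `K ⊆ ℂⁿ`. -/
def ratHull {n : ℕ} (K : Set (EuclideanSpace ℂ (Fin n))) : Set (EuclideanSpace ℂ (Fin n)) :=
  {z | ∀ P : MvPolynomial (Fin n) ℂ,
    MvPolynomial.eval (fun i => z i) P ∈
      (fun w : EuclideanSpace ℂ (Fin n) => MvPolynomial.eval (fun i => w i) P) '' K}

/-!
Write a point of the ball as `(a, b)` with, say, `|b| ≤ |a| < r/2`, and suppose a polynomial `Q`
vanishes at `(a, b)` but nowhere on `K`. The analytic discs `ζ ↦ (t a, t a ζ)`, `0 ≤ t ≤ 1`, have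
their boundary circles in `K` (as `2 (r/2)² ≤ r²`) and shrink to the origin, which also lies in
`K`. By the minimum modulus principle, `|Q|` on such a disc is bounded below by `δ = min |Q|`
over all the boundary circles as long as `Q` has no zero on the disc; hence the set of `t` for
which this holds is open and closed in `[0, 1]`, so `Q` has no zero on the disc `t = 1`, which
contains `(a, b)`.
-/

open Set Filter Topology Bornology Function

theorem Complex.le_norm_of_forall_mem_frontier_le_norm {E : Type*} [NormedAddCommGroup E]
    [NormedSpace ℂ E] [Nontrivial E] {f : E → ℂ} {U : Set E} (hU : IsBounded U)
    (hd : DiffContOnCl ℂ f U) (hne : ∀ z ∈ closure U, f z ≠ 0) {δ : ℝ} (hδ : 0 < δ)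
    (hC : ∀ z ∈ frontier U, δ ≤ ‖f z‖) {z : E} (hz : z ∈ closure U) : δ ≤ ‖f z‖ := by
  have hinv : ‖(f z)⁻¹‖ ≤ δ⁻¹ :=
    Complex.norm_le_of_forall_mem_frontier_norm_le hU (hd.inv hne)
      (fun w hw => by
        rw [Pi.inv_apply, norm_inv]
        exact inv_anti₀ hδ (hC w hw)) hz
  rw [norm_inv] at hinv
  exact (inv_le_inv₀ (norm_pos_iff.mpr (hne z hz)) hδ).mp hinv

theorem ne_zero_of_homotopy_of_ne_zero_on_circle {f : ℝ → ℂ → ℂ}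
    (hf : Continuous (uncurry f)) (hd : ∀ t ∈ Icc (0 : ℝ) 1, DiffContOnCl ℂ (f t) (ball 0 1))
    (hcircle : ∀ t ∈ Icc (0 : ℝ) 1, ∀ ζ ∈ sphere (0 : ℂ) 1, f t ζ ≠ 0)
    (h0 : ∀ ζ ∈ closedBall (0 : ℂ) 1, f 0 ζ ≠ 0) :
    ∀ ζ ∈ closedBall (0 : ℂ) 1, f 1 ζ ≠ 0 := by
  obtain ⟨⟨t₀, ζ₀⟩, ⟨ht₀, hζ₀⟩, hmin⟩ :=
    (isCompact_Icc.prod (isCompact_sphere (0 : ℂ) 1)).exists_isMinOn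
      ⟨(0, 1), ⟨left_mem_Icc.mpr zero_le_one, by simp⟩⟩ (continuous_norm.comp hf).continuousOn
  set δ := ‖f t₀ ζ₀‖
  have hδ : 0 < δ := norm_pos_iff.mpr (hcircle t₀ ht₀ ζ₀ hζ₀)
  have hbound : ∀ t ∈ Icc (0 : ℝ) 1, (∀ ζ ∈ closedBall (0 : ℂ) 1, f t ζ ≠ 0) →
      ∀ ζ ∈ closedBall (0 : ℂ) 1, δ ≤ ‖f t ζ‖ := by
    intro t ht hne ζ hζ
    rw [← closure_ball 0 one_ne_zero] at hne hζ
    refine Complex.le_norm_of_forall_mem_frontier_le_norm isBounded_ball (hd t ht) hne hδ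
      (fun w hw => ?_) hζ
    rw [frontier_ball 0 one_ne_zero] at hw
    exact hmin (mk_mem_prod ht hw)
  set s := {t : ℝ | ∀ ζ ∈ closedBall (0 : ℂ) 1, δ ≤ ‖f t ζ‖}
  have hs : IsClosed s := by
    simp only [s, ofPred_forall]
    exact isClosed_biInter fun ζ _ =>
      isClosed_le continuous_const (continuous_norm.comp (hf.comp (Continuous.prodMk_left ζ)))
  have hIcc : Icc (0 : ℝ) 1 ⊆ s := by
    refine (hs.inter isClosed_Icc).Icc_subset_of_forall_mem_nhdsWithin
      (hbound 0 (left_mem_Icc.mpr zero_le_one) h0) fun t ⟨hts, ht⟩ => ?_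
    have hnear : ∀ᶠ t' in 𝓝 t, ∀ ζ ∈ closedBall (0 : ℂ) 1, f t' ζ ≠ 0 :=
      (isCompact_closedBall 0 1).eventually_forall_of_forall_eventually fun ζ hζ =>
        (hf.continuousAt.eventually_ne (norm_pos_iff.mp (hδ.trans_le (hts ζ hζ))))
    filter_upwards [nhdsWithin_le_nhds hnear, Ioo_mem_nhdsGT ht.2] with t' hne ht'
    exact hbound t' ⟨ht.1.trans ht'.1.le, ht'.2.le⟩ hne
  intro ζ hζ
  exact norm_pos_iff.mp (hδ.trans_le (hIcc (right_mem_Icc.mpr zero_le_one) ζ hζ))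

theorem ne_zero_of_ne_zero_on_cone_of_norm_le_norm {g : ℂ × ℂ → ℂ} (hg : Differentiable ℂ g)
    {R : ℝ} (hcone : ∀ z w : ℂ, ‖z‖ = ‖w‖ → ‖z‖ ≤ R → g (z, w) ≠ 0) {a b : ℂ}
    (ha : ‖a‖ ≤ R) (hba : ‖b‖ ≤ ‖a‖) : g (a, b) ≠ 0 := by
  set f : ℝ → ℂ → ℂ := fun t ζ => g (t * a, t * a * ζ)
  have hf : Continuous (uncurry f) := hg.continuous.comp (by fun_prop)
  have hd : ∀ t, Differentiable ℂ (f t) := fun t => hg.comp (by fun_prop)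
  have hcircle : ∀ t ∈ Icc (0 : ℝ) 1, ∀ ζ ∈ sphere (0 : ℂ) 1, f t ζ ≠ 0 := by
    intro t ht ζ hζ
    rw [mem_sphere_zero_iff_norm] at hζ
    refine hcone _ _ (by rw [norm_mul _ ζ, hζ, mul_one]) ?_
    calc ‖(t : ℂ) * a‖ = t * ‖a‖ := by rw [norm_mul, Complex.norm_of_nonneg ht.1]
      _ ≤ ‖a‖ := mul_le_of_le_one_left (norm_nonneg a) ht.2
      _ ≤ R := ha
  have h0 : ∀ ζ ∈ closedBall (0 : ℂ) 1, f 0 ζ ≠ 0 := by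
    intro ζ _
    simpa [f] using hcone 0 0 rfl (by simpa using (norm_nonneg a).trans ha)
  have hquot : b / a ∈ closedBall (0 : ℂ) 1 := by
    rw [mem_closedBall_zero_iff, norm_div]
    exact div_le_one_of_le₀ hba (norm_nonneg a)
  have hab : a * (b / a) = b := by
    rcases eq_or_ne a 0 with rfl | ha0
    · simpa using (norm_le_zero_iff.mp (hba.trans_eq norm_zero)).symm
    · exact mul_div_cancel₀ b ha0
  simpa [f, hab] using ne_zero_of_homotopy_of_ne_zero_on_circle hf
    (fun t _ => (hd t).diffContOnCl) hcircle h0 _ hquot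

theorem ne_zero_of_ne_zero_on_cone {g : ℂ × ℂ → ℂ} (hg : Differentiable ℂ g) {R : ℝ}
    (hcone : ∀ z w : ℂ, ‖z‖ = ‖w‖ → ‖z‖ ≤ R → g (z, w) ≠ 0) {a b : ℂ}
    (ha : ‖a‖ ≤ R) (hb : ‖b‖ ≤ R) : g (a, b) ≠ 0 := by
  rcases le_total ‖b‖ ‖a‖ with hba | hab
  · exact ne_zero_of_ne_zero_on_cone_of_norm_le_norm hg hcone ha hba
  · exact ne_zero_of_ne_zero_on_cone_of_norm_le_norm (g := g ∘ Prod.swap)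
      (hg.comp (differentiable_snd.prodMk differentiable_fst))
      (fun z w hzw hz => hcone w z hzw.symm (hzw ▸ hz)) hb hab

theorem MvPolynomial.differentiable_eval_pair (P : MvPolynomial (Fin 2) ℂ) :
    Differentiable ℂ fun x : ℂ × ℂ => MvPolynomial.eval ![x.1, x.2] P := by
  have hpair : (fun x : ℂ × ℂ => MvPolynomial.eval ![x.1, x.2] P) = fun x =>
      MvPolynomial.eval (fun i => ![ContinuousLinearMap.fst ℂ ℂ ℂ,
        ContinuousLinearMap.snd ℂ ℂ ℂ] i x) P := by
    ext x
    congr 2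
    funext i
    fin_cases i <;> rfl
  rw [hpair]
  exact differentiableOn_univ.mp (AnalyticOnNhd.eval_continuousLinearMap' _ P).differentiableOn

theorem cone_rational_hull_contains_ball_general {r : ℝ}
    (H K : Set (EuclideanSpace ℂ (Fin 2)))
    (hHdef : H = {p | ‖p 0‖ = ‖p 1‖})
    (hKdef : K = {p | p ∈ H ∧ ‖p 0‖ ^ 2 + ‖p 1‖ ^ 2 ≤ r ^ 2}) :
    ball (0 : EuclideanSpace ℂ (Fin 2)) (r / 2) ⊆ ratHull K := by
  subst hHdef hKdef
  intro p hp P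
  by_contra hP
  set g : ℂ × ℂ → ℂ := fun x => MvPolynomial.eval ![x.1, x.2] P - MvPolynomial.eval (p ·) P
  have hcone : ∀ z w : ℂ, ‖z‖ = ‖w‖ → ‖z‖ ≤ r / 2 → g (z, w) ≠ 0 := by
    intro z w hzw hz hg
    refine hP ⟨!₂[z, w], ⟨hzw, ?_⟩, sub_eq_zero.mp hg⟩
    show ‖z‖ ^ 2 + ‖w‖ ^ 2 ≤ r ^ 2
    nlinarith [norm_nonneg z]
  have hp_le : ∀ i, ‖p i‖ ≤ r / 2 :=
    fun i => (PiLp.norm_apply_le p i).trans (mem_ball_zero_iff.mp hp).le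
  refine ne_zero_of_ne_zero_on_cone ((P.differentiable_eval_pair).sub_const _) hcone
    (hp_le 0) (hp_le 1)
    (sub_eq_zero.mpr (congrArg (MvPolynomial.eval · P) (funext fun i => by fin_cases i <;> rfl)))

theorem cone_rational_hull_contains_ball {r : ℝ} (hr : 0 < r)
    (H K : Set (EuclideanSpace ℂ (Fin 2)))
    (hHdef : H = {p | ‖p 0‖ = ‖p 1‖})
    (hKdef : K = {p | p ∈ H ∧ ‖p 0‖ ^ 2 + ‖p 1‖ ^ 2 ≤ r ^ 2}) :
    ball (0 : EuclideanSpace ℂ (Fin 2)) (r / 2) ⊆ ratHull K :=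
  cone_rational_hull_contains_ball_general H K hHdef hKdef
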